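/- arXiv:2311.11320 — 3 statements merged into one kernel-verified Lean document; each statement's English description precedes it below -/
import Mathlib

section
/- Let M₁, ..., M_D be square complex matrices with M_μ of size N_μ, and define the 'Kronecker sum'-type operator 𝒟 = Σ_μ (1_{N_D} ⊗ ... ⊗ M_μ ⊗ ... ⊗ 1_{N_1}) ⊗ γ_μ, where γ_1, ..., γ_D are matrices satisfying γ_μγ_ν + γ_νγ_μ = 2δ_{μν}·1. If each M_μ is unitarily diagonalizable with eigenvalues iλ_μ^{(m_μ)} (λ real), then 𝒟 has a nonzero kernel vector exactly when there exists a multi-index (m_1,...,m_D) with λ_μ^{(m_μ)} = 0 for all μ, and dim ker 𝒟 = rank(γ) · #{multi-indices with all λ_μ^{(m_μ)} = 0}. -/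
/-!
Conjugating by the unitary `(⊗_μ U_μ) ⊗ 1` turns `𝒟` into a block-diagonal operator whose block
at the multi-index `m` is `A_m = ∑_μ i λ_μ^(m_μ) γ_μ`. The Clifford relations give
`A_m² = -(∑_μ (λ_μ^(m_μ))²) • 1`, so `A_m` is injective unless every `λ_μ^(m_μ)` vanishes, and then
`A_m = 0`. Hence the kernel of `𝒟` is one copy of `ℂ^r` for each multi-index with all `λ` zero.
-/

open Matrix Kronecker Module

namespace Matrix

variable {ι R : Type*} [Fintype ι]

def piKronecker {m n : ι → Type*} [CommSemiring R] (A : ∀ i, Matrix (m i) (n i) R) :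
    Matrix (∀ i, m i) (∀ i, n i) R :=
  of fun p q => ∏ i, A i (p i) (q i)

section CommSemiring

variable [CommSemiring R] {l m n : ι → Type*}

theorem piKronecker_diagonal [∀ i, DecidableEq (m i)] (d : ∀ i, m i → R) :
    piKronecker (fun i => diagonal (d i)) = diagonal fun p => ∏ i, d i (p i) := by
  ext p q
  simp only [piKronecker, of_apply, diagonal_apply, Finset.prod_ite_zero, Finset.mem_univ,
    forall_const, funext_iff]

theorem piKronecker_one [∀ i, DecidableEq (m i)] :
    piKronecker (fun i => (1 : Matrix (m i) (m i) R)) = 1 := by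
  simp only [← diagonal_one, piKronecker_diagonal, Finset.prod_const_one]

variable [DecidableEq ι]

theorem piKronecker_mul [∀ i, Fintype (m i)] (A : ∀ i, Matrix (l i) (m i) R)
    (B : ∀ i, Matrix (m i) (n i) R) :
    piKronecker (fun i => A i * B i) = piKronecker A * piKronecker B := by
  ext p q
  simp only [piKronecker, of_apply, mul_apply, Finset.prod_univ_sum, Fintype.piFinset_univ,
    Finset.prod_mul_distrib]

theorem piKronecker_mulSingle_apply [∀ i, DecidableEq (m i)] (μ : ι) (X : Matrix (m μ) (m μ) R)
    (p q : ∀ i, m i) :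
    piKronecker (Pi.mulSingle μ X) p q =
      X (p μ) (q μ) * ∏ ν ∈ Finset.univ.erase μ, if p ν = q ν then 1 else 0 := by
  rw [piKronecker, of_apply, ← Finset.mul_prod_erase _ _ (Finset.mem_univ μ), Pi.mulSingle_eq_same]
  congr 1
  refine Finset.prod_congr rfl fun ν hν => ?_
  rw [Pi.mulSingle_eq_of_ne (Finset.ne_of_mem_erase hν), one_apply]

theorem sum_piKronecker_mulSingle_kronecker_apply [∀ i, DecidableEq (m i)] {o : Type*}
    (M : ∀ i, Matrix (m i) (m i) R) (γ : ι → Matrix o o R) (p q : (∀ i, m i) × o) :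
    (∑ μ, piKronecker (Pi.mulSingle μ (M μ)) ⊗ₖ γ μ) p q =
      ∑ μ, M μ (p.1 μ) (q.1 μ) * γ μ p.2 q.2 *
        ∏ ν ∈ Finset.univ.erase μ, if p.1 ν = q.1 ν then 1 else 0 := by
  simp only [Matrix.sum_apply, kroneckerMap_apply, piKronecker_mulSingle_apply]
  exact Finset.sum_congr rfl fun μ _ => by ring

theorem piKronecker_mulSingle_diagonal [∀ i, DecidableEq (m i)] (μ : ι) (d : m μ → R) :
    piKronecker (Pi.mulSingle μ (diagonal d)) = diagonal fun p => d (p μ) := by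
  have hdiag := funext
    (Pi.apply_mulSingle (M := fun ν => m ν → R) (fun _ => diagonal) (fun _ => diagonal_one) μ d)
  have hprod (p : ∀ i, m i) :
      ∏ ν, Pi.mulSingle (M := fun ν => m ν → R) μ d ν (p ν) = d (p μ) := by
    simp only [Fintype.prod_pi_mulSingle',
      Pi.apply_mulSingle (M := fun ν => m ν → R) (N := fun _ => R) (fun ν g => g (p ν))
        (fun _ => rfl) μ d]
  rw [← hdiag, piKronecker_diagonal]
  simp only [hprod]

end CommSemiring

section StarRing

variable [CommRing R] [StarRing R] {m : ι → Type*}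

theorem conjTranspose_piKronecker {n : ι → Type*} (A : ∀ i, Matrix (m i) (n i) R) :
    (piKronecker A)ᴴ = piKronecker fun i => (A i)ᴴ := by
  ext p q
  simp only [piKronecker, conjTranspose_apply, of_apply, star_prod]

variable [DecidableEq ι] [∀ i, Fintype (m i)] [∀ i, DecidableEq (m i)]

theorem piKronecker_mem_unitaryGroup {U : ∀ i, Matrix (m i) (m i) R}
    (hU : ∀ i, U i ∈ unitaryGroup (m i) R) : piKronecker U ∈ unitaryGroup (∀ i, m i) R := by
  simp only [mem_unitaryGroup_iff, star_eq_conjTranspose] at hU ⊢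
  rw [conjTranspose_piKronecker, ← piKronecker_mul]
  simp only [hU, piKronecker_one]

theorem piKronecker_mulSingle_unitary_conj {U : ∀ i, Matrix (m i) (m i) R}
    (hU : ∀ i, U i ∈ unitaryGroup (m i) R) (μ : ι) (X : Matrix (m μ) (m μ) R) :
    piKronecker (Pi.mulSingle μ (U μ * X * star (U μ))) =
      piKronecker U * piKronecker (Pi.mulSingle μ X) * star (piKronecker U) := by
  have hconj := funext
    (Pi.apply_mulSingle (fun ν Y => U ν * Y * star (U ν))
      (fun ν => by rw [mul_one, ← mem_unitaryGroup_iff.mp (hU ν)]) μ X)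
  rw [← hconj, piKronecker_mul, piKronecker_mul, star_eq_conjTranspose, conjTranspose_piKronecker]
  rfl

end StarRing

section Kronecker

variable {R m n : Type*} [Fintype m] [Fintype n] [DecidableEq n]

theorem kronecker_mem_unitaryGroup [DecidableEq m] [CommRing R] [StarRing R]
    {A : Matrix m m R} {B : Matrix n n R} (hA : A ∈ unitaryGroup m R) (hB : B ∈ unitaryGroup n R) :
    A ⊗ₖ B ∈ unitaryGroup (m × n) R := by
  rw [mem_unitaryGroup_iff, star_eq_conjTranspose] at hA hB ⊢
  rw [conjTranspose_kronecker, ← mul_kronecker_mul, hA, hB, one_kronecker_one]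

theorem sum_conj_kronecker [CommRing R] [StarRing R] (P : Matrix m m R) (X : ι → Matrix m m R)
    (γ : ι → Matrix n n R) :
    ∑ μ, (P * X μ * star P) ⊗ₖ γ μ = (P ⊗ₖ 1) * (∑ μ, X μ ⊗ₖ γ μ) * star (P ⊗ₖ 1) := by
  rw [Finset.mul_sum, Finset.sum_mul]
  refine Finset.sum_congr rfl fun μ _ => ?_
  simp only [star_eq_conjTranspose]
  rw [conjTranspose_kronecker, conjTranspose_one, ← mul_kronecker_mul, ← mul_kronecker_mul,
    one_mul, mul_one]

theorem toLin'_sum_diagonal_kronecker {κ : Type*} [Fintype κ] [DecidableEq κ] [CommSemiring R]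
    (c : ι → κ → R) (γ : ι → Matrix n n R) :
    toLin' (∑ μ, diagonal (c μ) ⊗ₖ γ μ) =
      (LinearEquiv.curry R R κ n).symm.toLinearMap ∘ₗ
        LinearMap.piMap (fun p => toLin' (∑ μ, c μ p • γ μ)) ∘ₗ
          (LinearEquiv.curry R R κ n).toLinearMap := by
  refine LinearMap.ext fun v => funext fun ⟨p, a⟩ => ?_
  simp [mulVec, dotProduct, Fintype.sum_prod_type, diagonal_apply, Finset.mul_sum, ite_mul,
    mul_assoc]


end Kronecker

end Matrix

namespace LinearMap

section Semiring

variable {R : Type*} [Semiring R]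

def kerPiMapEquiv {ι : Type*} {φ ψ : ι → Type*} [∀ i, AddCommMonoid (φ i)] [∀ i, Module R (φ i)]
    [∀ i, AddCommMonoid (ψ i)] [∀ i, Module R (ψ i)] (f : ∀ i, φ i →ₗ[R] ψ i) :
    ker (piMap f) ≃ₗ[R] ∀ i, ker (f i) where
  toFun v i := ⟨v.1 i, congr_fun (mem_ker.mp v.2) i⟩
  invFun w := ⟨fun i => w i, mem_ker.mpr (funext fun i => (w i).2)⟩
  map_add' _ _ := rfl
  map_smul' _ _ := rfl
  left_inv _ := rfl
  right_inv _ := rfl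

theorem finrank_ker_equiv_comp_comp {V V' W W' : Type*} [AddCommMonoid V] [Module R V]
    [AddCommMonoid V'] [Module R V'] [AddCommMonoid W] [Module R W] [AddCommMonoid W']
    [Module R W'] (e : V ≃ₗ[R] V') (f : V' →ₗ[R] W') (e' : W' ≃ₗ[R] W) :
    finrank R (ker (e'.toLinearMap ∘ₗ f ∘ₗ e.toLinearMap)) = finrank R (ker f) := by
  rw [LinearEquiv.ker_comp, ker_comp, Submodule.comap_equiv_eq_map_symm,
    LinearEquiv.finrank_map_eq]

end Semiring

theorem finrank_ker_piMap {K ι : Type*} [Field K] [Fintype ι] {φ ψ : ι → Type*}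
    [∀ i, AddCommGroup (φ i)] [∀ i, Module K (φ i)] [∀ i, FiniteDimensional K (φ i)]
    [∀ i, AddCommGroup (ψ i)] [∀ i, Module K (ψ i)] (f : ∀ i, φ i →ₗ[K] ψ i) :
    finrank K (ker (piMap f)) = ∑ i, finrank K (ker (f i)) := by
  rw [(kerPiMapEquiv f).finrank_eq, Module.finrank_pi_fintype]

end LinearMap

namespace Matrix

variable {n : Type*} [Fintype n] [DecidableEq n]

theorem finrank_ker_toLin'_unitary_conj {R : Type*} [CommRing R] [StarRing R]
    {W : Matrix n n R} (hW : W ∈ unitaryGroup n R) (B : Matrix n n R) :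
    finrank R (LinearMap.ker (toLin' (W * B * star W))) =
      finrank R (LinearMap.ker (toLin' B)) := by
  have hconj : toLin' (W * B * star W) =
      (UnitaryGroup.toLinearEquiv ⟨W, hW⟩).toLinearMap ∘ₗ toLin' B ∘ₗ
        (UnitaryGroup.toLinearEquiv (star ⟨W, hW⟩)).toLinearMap := by
    rw [toLin'_mul, toLin'_mul]
    rfl
  rw [hconj, LinearMap.finrank_ker_equiv_comp_comp]

theorem ker_toLin'_eq_bot_of_mul_self_eq_smul_one {R : Type*} [CommRing R] [NoZeroDivisors R]
    {A : Matrix n n R} {s : R} (hs : s ≠ 0) (hA : A * A = s • 1) :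
    LinearMap.ker (toLin' A) = ⊥ := by
  refine LinearMap.ker_eq_bot'.mpr fun v hv => ?_
  rw [toLin'_apply] at hv
  have hsv : s • v = 0 := by
    rw [← one_mulVec v, ← smul_mulVec, ← hA, ← mulVec_mulVec, hv, mulVec_zero]
  exact (smul_eq_zero.mp hsv).resolve_left hs

theorem exists_ne_zero_mulVec_eq_zero_iff_finrank_ker_pos {K : Type*} [Field K]
    (A : Matrix n n K) :
    (∃ v, v ≠ 0 ∧ A *ᵥ v = 0) ↔ 0 < finrank K (LinearMap.ker (toLin' A)) := by
  rw [pos_iff_ne_zero, Ne, Submodule.finrank_eq_zero, ← Ne, Submodule.ne_bot_iff]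
  simp only [LinearMap.mem_ker, toLin'_apply, and_comm]

end Matrix

theorem sum_smul_mul_self_of_clifford {K A ι : Type*} [Field K] [NeZero (2 : K)] [Ring A]
    [Algebra K A] [Fintype ι] [DecidableEq ι] {γ : ι → A}
    (hγ : ∀ μ ν, γ μ * γ ν + γ ν * γ μ = if μ = ν then (2 : K) • (1 : A) else 0) (c : ι → K) :
    (∑ μ, c μ • γ μ) * (∑ μ, c μ • γ μ) = (∑ μ, c μ * c μ) • (1 : A) := by
  have hXX : (∑ μ, c μ • γ μ) * (∑ μ, c μ • γ μ) = ∑ μ, ∑ ν, (c μ * c ν) • (γ μ * γ ν) := by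
    simp only [Fintype.sum_mul_sum, smul_mul_smul_comm]
  have hXX' : (∑ μ, c μ • γ μ) * (∑ μ, c μ • γ μ) = ∑ μ, ∑ ν, (c μ * c ν) • (γ ν * γ μ) := by
    rw [hXX, Finset.sum_comm]
    exact Finset.sum_congr rfl fun μ _ => Finset.sum_congr rfl fun ν _ => by rw [mul_comm (c ν)]
  apply smul_right_injective A (two_ne_zero : (2 : K) ≠ 0)
  calc (2 : K) • ((∑ μ, c μ • γ μ) * (∑ μ, c μ • γ μ))
      = ∑ μ, ∑ ν, (c μ * c ν) • (γ μ * γ ν + γ ν * γ μ) := by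
        rw [two_smul]
        nth_rw 1 [hXX]
        rw [hXX']
        simp only [smul_add, Finset.sum_add_distrib]
    _ = ∑ μ, (c μ * c μ) • (2 : K) • (1 : A) := by
        simp only [hγ, smul_ite, smul_zero, Finset.sum_ite_eq, Finset.mem_univ, if_true]
    _ = (2 : K) • ((∑ μ, c μ * c μ) • (1 : A)) := by
        rw [smul_comm, ← Finset.sum_smul]

open Complex in
theorem finrank_ker_toLin'_sum_I_mul_smul {ι n : Type*} [Fintype ι] [DecidableEq ι] [Fintype n]
    [DecidableEq n] {γ : ι → Matrix n n ℂ}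
    (hγ : ∀ μ ν, γ μ * γ ν + γ ν * γ μ = if μ = ν then (2 : ℂ) • (1 : Matrix n n ℂ) else 0)
    (lam : ι → ℝ) :
    finrank ℂ (LinearMap.ker (toLin' (∑ μ, (I * lam μ) • γ μ))) =
      if ∀ μ, lam μ = 0 then Fintype.card n else 0 := by
  split_ifs with hlam
  · have h0 : ∑ μ, (I * lam μ) • γ μ = 0 := by
      simp only [hlam, ofReal_zero, mul_zero, zero_smul, Finset.sum_const_zero]
    rw [h0, map_zero, LinearMap.ker_zero, finrank_top, Module.finrank_fintype_fun_eq_card]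
  · obtain ⟨μ₀, hμ₀⟩ := not_forall.mp hlam
    have hpos : 0 < ∑ μ, lam μ ^ 2 :=
      Finset.sum_pos' (fun μ _ => sq_nonneg _) ⟨μ₀, Finset.mem_univ μ₀, by positivity⟩
    have hsq : ∑ μ, (I * lam μ) * (I * lam μ) = -((∑ μ, lam μ ^ 2 : ℝ) : ℂ) := by
      push_cast
      rw [← Finset.sum_neg_distrib]
      exact Finset.sum_congr rfl fun μ _ => by linear_combination (lam μ : ℂ) ^ 2 * I_sq
    have hs : ∑ μ, (I * lam μ) * (I * lam μ) ≠ 0 := by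
      rw [hsq, neg_ne_zero, ofReal_ne_zero]
      exact hpos.ne'
    rw [Matrix.ker_toLin'_eq_bot_of_mul_self_eq_smul_one hs (sum_smul_mul_self_of_clifford hγ _),
      finrank_bot]

open Matrix in
theorem kroneckerSum_dirac_ker_dim_general
    (D : ℕ) (N : Fin D → ℕ) (r : ℕ) (hr : 1 ≤ r)
    (γ : Fin D → Matrix (Fin r) (Fin r) ℂ)
    (hγ : ∀ μ ν, γ μ * γ ν + γ ν * γ μ = if μ = ν then (2 : ℂ) • (1 : Matrix (Fin r) (Fin r) ℂ) else 0)
    (M : ∀ μ, Matrix (Fin (N μ)) (Fin (N μ)) ℂ)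
    (U : ∀ μ, Matrix (Fin (N μ)) (Fin (N μ)) ℂ)
    (hU : ∀ μ, U μ ∈ Matrix.unitaryGroup (Fin (N μ)) ℂ)
    (lam : ∀ μ, Fin (N μ) → ℝ)
    (hdiag : ∀ μ, (U μ)ᴴ * M μ * U μ =
      Matrix.diagonal (fun m => Complex.I * (lam μ m : ℝ))) :
    let Dop : Matrix ((∀ μ, Fin (N μ)) × Fin r) ((∀ μ, Fin (N μ)) × Fin r) ℂ :=
      Matrix.of fun p q => ∑ μ, (M μ (p.1 μ) (q.1 μ)) * (γ μ p.2 q.2) *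
        ∏ ν ∈ Finset.univ.erase μ, (if p.1 ν = q.1 ν then (1 : ℂ) else 0)
    (Module.finrank ℂ (LinearMap.ker (Matrix.toLin' Dop)) =
        r * Fintype.card {m : ∀ μ, Fin (N μ) // ∀ μ, lam μ (m μ) = 0}) ∧
    ((∃ v : (∀ μ, Fin (N μ)) × Fin r → ℂ, v ≠ 0 ∧ Dop.mulVec v = 0) ↔
        ∃ m : ∀ μ, Fin (N μ), ∀ μ, lam μ (m μ) = 0) := by
  intro Dop
  have hM (μ : Fin D) : M μ = U μ * diagonal (fun m => Complex.I * lam μ m) * star (U μ) := by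
    rw [← hdiag μ, ← star_eq_conjTranspose, ← mul_assoc, ← mul_assoc,
      mem_unitaryGroup_iff.mp (hU μ), one_mul, mul_assoc, mem_unitaryGroup_iff.mp (hU μ), mul_one]
  have hDop : Dop = (piKronecker U ⊗ₖ 1) *
      (∑ μ, diagonal (fun p => Complex.I * lam μ (p μ)) ⊗ₖ γ μ) * star (piKronecker U ⊗ₖ 1) := by
    have hsum : Dop = ∑ μ, piKronecker (Pi.mulSingle μ (M μ)) ⊗ₖ γ μ := by
      ext p q
      rw [sum_piKronecker_mulSingle_kronecker_apply]
      rfl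
    rw [hsum, ← sum_conj_kronecker]
    simp only [hM, piKronecker_mulSingle_unitary_conj hU, piKronecker_mulSingle_diagonal]
  have hdim : finrank ℂ (LinearMap.ker (toLin' Dop)) =
      r * Fintype.card {m : ∀ μ, Fin (N μ) // ∀ μ, lam μ (m μ) = 0} := by
    rw [hDop, finrank_ker_toLin'_unitary_conj (kronecker_mem_unitaryGroup
      (piKronecker_mem_unitaryGroup hU) (one_mem _)), toLin'_sum_diagonal_kronecker,
      LinearMap.finrank_ker_equiv_comp_comp, LinearMap.finrank_ker_piMap]
    simp only [finrank_ker_toLin'_sum_I_mul_smul hγ, Fintype.card_fin, Finset.sum_ite,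
      Finset.sum_const_zero, add_zero, Finset.sum_const, smul_eq_mul, Fintype.card_subtype,
      mul_comm]
  refine ⟨hdim, ?_⟩
  rw [exists_ne_zero_mulVec_eq_zero_iff_finrank_ker_pos, hdim, Nat.mul_pos_iff_of_pos_left hr,
    Fintype.card_pos_iff, nonempty_subtype]

open Matrix in
theorem kroneckerSum_dirac_ker_dim
    (D : ℕ) (hD : 1 ≤ D) (N : Fin D → ℕ) (r : ℕ) (hr : 1 ≤ r)
    (γ : Fin D → Matrix (Fin r) (Fin r) ℂ)
    (hγ : ∀ μ ν, γ μ * γ ν + γ ν * γ μ = if μ = ν then (2 : ℂ) • (1 : Matrix (Fin r) (Fin r) ℂ) else 0)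
    (M : ∀ μ, Matrix (Fin (N μ)) (Fin (N μ)) ℂ)
    (hskew : ∀ μ, (M μ)ᴴ = -(M μ))
    (U : ∀ μ, Matrix (Fin (N μ)) (Fin (N μ)) ℂ)
    (hU : ∀ μ, U μ ∈ Matrix.unitaryGroup (Fin (N μ)) ℂ)
    (lam : ∀ μ, Fin (N μ) → ℝ)
    (hdiag : ∀ μ, (U μ)ᴴ * M μ * U μ =
      Matrix.diagonal (fun m => Complex.I * (lam μ m : ℝ))) :
    let Dop : Matrix ((∀ μ, Fin (N μ)) × Fin r) ((∀ μ, Fin (N μ)) × Fin r) ℂ :=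
      Matrix.of fun p q => ∑ μ, (M μ (p.1 μ) (q.1 μ)) * (γ μ p.2 q.2) *
        ∏ ν ∈ Finset.univ.erase μ, (if p.1 ν = q.1 ν then (1 : ℂ) else 0)
    (Module.finrank ℂ (LinearMap.ker (Matrix.toLin' Dop)) =
        r * Fintype.card {m : ∀ μ, Fin (N μ) // ∀ μ, lam μ (m μ) = 0}) ∧
    ((∃ v : (∀ μ, Fin (N μ)) × Fin r → ℂ, v ≠ 0 ∧ Dop.mulVec v = 0) ↔
        ∃ m : ∀ μ, Fin (N μ), ∀ μ, lam μ (m μ) = 0) :=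
  kroneckerSum_dirac_ker_dim_general D N r hr γ hγ M U hU lam hdiag
end

section
/- Let G be the cartesian product of d cycle digraphs each with an even number of vertices and (D-d) simple directed paths each with an odd number of vertices, and let 𝒟(G) = Σ_μ (A_as)_μ ⊗ γ_μ be the associated naive Dirac operator built from their anti-symmetrized adjacency matrices and gamma matrices satisfying {γ_μ, γ_ν} = 2δ_{μν}. Then dim ker 𝒟(G) = rank(γ) · 2^d. -/
/-- Anti-symmetrized adjacency matrix of the cycle digraph on `N` vertices. -/
def cycleAsAdj (N : ℕ) : Matrix (Fin N) (Fin N) ℂ :=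
  fun j k => if (k : ℕ) = ((j : ℕ) + 1) % N then 1
    else if (j : ℕ) = ((k : ℕ) + 1) % N then -1 else 0

/-- Anti-symmetrized adjacency matrix of the simple directed path on `N` vertices. -/
def pathAsAdj (N : ℕ) : Matrix (Fin N) (Fin N) ℂ :=
  fun j k => if (k : ℕ) = (j : ℕ) + 1 then 1
    else if (j : ℕ) = (k : ℕ) + 1 then -1 else 0

/-!
Write `𝒟 = ∑ μ, g μ * b μ` with `b μ = (A_as)_μ ⊗ 1` and `g μ = 1 ⊗ γ μ`. The `b μ` commute with
each other and with every `g ν`, so the Clifford relations give `𝒟 ^ 2 = ∑ μ, b μ ^ 2`. Each `b μ`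
is skew-Hermitian, so `⟪v, 𝒟 ^ 2 v⟫ = -∑ μ, ‖b μ v‖²` and `ker 𝒟 = ⋂ μ, ker (b μ)`.
A kernel vector of an even cycle is a 2-periodic function, one of an odd path vanishes on odd
vertices and is constant on even ones. Applying this along every coordinate line, a vector of
`⋂ μ, ker (b μ)` is determined by its values at the points whose cycle coordinates lie in `{0, 1}`
and whose path coordinates vanish, and these values are arbitrary: `2 ^ d * r` of them.
-/

open Matrix Finset Function
open scoped Kronecker ComplexOrder

theorem sq_sum_mul_eq_sum_sq_of_clifford {R ι : Type*} [Ring R] [Module ℚ R]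
    [Fintype ι] [DecidableEq ι] (g b : ι → R) (hb : ∀ μ ν, Commute (b μ) (b ν))
    (hgb : ∀ μ ν, Commute (g μ) (b ν))
    (hg : ∀ μ ν, g μ * g ν + g ν * g μ = if μ = ν then 2 else 0) :
    (∑ μ, g μ * b μ) ^ 2 = ∑ μ, b μ ^ 2 := by
  have expand : (∑ μ, g μ * b μ) ^ 2 = ∑ μ, ∑ ν, g μ * g ν * (b μ * b ν) := by
    rw [sq, sum_mul_sum]
    refine sum_congr rfl fun μ _ => sum_congr rfl fun ν _ => ?_
    rw [mul_assoc, ← mul_assoc (b μ), ← (hgb ν μ).eq]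
    noncomm_ring
  -- symmetrizing in `(μ, ν)` turns the product of the `g`s into their anticommutator
  have symm : (2 : ℚ) • (∑ μ, g μ * b μ) ^ 2 = (2 : ℚ) • ∑ μ, b μ ^ 2 := calc
    (2 : ℚ) • (∑ μ, g μ * b μ) ^ 2
        = ∑ μ, ∑ ν, (g μ * g ν + g ν * g μ) * (b μ * b ν) := by
      rw [two_smul, expand]
      conv_lhs => enter [2]; rw [sum_comm]
      simp only [← sum_add_distrib]
      refine sum_congr rfl fun μ _ => sum_congr rfl fun ν _ => ?_
      rw [(hb ν μ).eq, add_mul]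
    _ = (2 : ℚ) • ∑ μ, b μ ^ 2 := by
      simp only [hg, ite_mul, zero_mul, sum_ite_eq, mem_univ, if_true, smul_sum, sq]
      refine sum_congr rfl fun μ _ => ?_
      rw [two_mul, two_smul]
  exact smul_right_injective R two_ne_zero symm

theorem mulVec_eq_zero_of_sum_mul_self_mulVec_eq_zero {R n ι : Type*} [CommRing R]
    [PartialOrder R] [StarRing R] [StarOrderedRing R] [NoZeroDivisors R] [Fintype n] [Fintype ι]
    {C : ι → Matrix n n R} (hC : ∀ μ, (C μ)ᴴ = -C μ) {v : n → R}
    (hv : (∑ μ, C μ * C μ) *ᵥ v = 0) (μ : ι) : C μ *ᵥ v = 0 := by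
  have skew : ∀ μ, star v ⬝ᵥ (C μ * C μ) *ᵥ v = -(star (C μ *ᵥ v) ⬝ᵥ C μ *ᵥ v) := fun μ => by
    rw [← mulVec_mulVec, dotProduct_mulVec, star_mulVec, hC, vecMul_neg, neg_dotProduct, neg_neg]
  have hsum : ∑ μ, star (C μ *ᵥ v) ⬝ᵥ C μ *ᵥ v = 0 := by
    have := congrArg (star v ⬝ᵥ ·) hv
    simpa [sum_mulVec, dotProduct_sum, skew] using this
  rw [Fintype.sum_eq_zero_iff_of_nonneg fun μ => dotProduct_star_self_nonneg _] at hsum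
  exact dotProduct_star_self_eq_zero.mp (congrFun hsum μ)

theorem forall_update_eq_mul_iff {ι M : Type*} [Fintype ι] [DecidableEq ι] {X : ι → Type*}
    [CommMonoid M] (ρ : ∀ μ, X μ → X μ) (hρ : ∀ μ j, ρ μ (ρ μ j) = ρ μ j) (c : ∀ μ, X μ → M)
    (hc : ∀ μ j, c μ (ρ μ j) = 1) (v : (∀ μ, X μ) → M) :
    (∀ μ x j, v (update x μ j) = c μ j * v (update x μ (ρ μ j))) ↔
      ∀ x, v x = (∏ μ, c μ (x μ)) * v (fun μ => ρ μ (x μ)) := by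
  constructor
  · intro h
    suffices H : ∀ s : Finset ι, ∀ x,
        v x = (∏ μ ∈ s, c μ (x μ)) * v (fun μ => if μ ∈ s then ρ μ (x μ) else x μ) by
      simpa using H univ
    intro s
    induction s using Finset.induction_on with
    | empty => simp
    | insert a s ha ih =>
      intro x
      set x' : ∀ μ, X μ := fun μ => if μ ∈ s then ρ μ (x μ) else x μ
      have hx'a : x' a = x a := if_neg ha
      have step := h a x' (x' a)
      rw [update_eq_self, hx'a] at step
      have hupd : update x' a (ρ a (x a)) = fun μ => if μ ∈ insert a s then ρ μ (x μ) else x μ := by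
        funext μ
        rcases eq_or_ne μ a with rfl | hμa
        · simp
        · simp [x', hμa]
      rw [ih x, step, hupd, prod_insert ha]
      ac_rfl
  · intro h μ x j
    have hρx : ∀ k, (fun ν => ρ ν (update x μ k ν)) = fun ν => ρ ν (update x μ (ρ μ k) ν) := by
      intro k
      funext ν
      rcases eq_or_ne ν μ with rfl | hνμ
      · simp [hρ]
      · simp [hνμ]
    have hprod : ∀ k, ∏ ν, c ν (update x μ k ν) = c μ k * ∏ ν ∈ univ \ {μ}, c ν (x ν) := by
      intro k
      simp only [apply_update (fun ν => c ν), prod_update_of_mem (mem_univ μ)]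
    rw [h, h (update x μ (ρ μ j)), hprod, hprod, hρx j, hc, one_mul, mul_assoc]

section SlotMatrix

variable {K ι : Type*} [CommRing K] [Fintype ι] [DecidableEq ι] {X : ι → Type*}
  [∀ μ, DecidableEq (X μ)]

def slotMatrix (μ : ι) (A : Matrix (X μ) (X μ) K) : Matrix (∀ ν, X ν) (∀ ν, X ν) K :=
  of fun x y => A (x μ) (y μ) * ∏ ν ∈ univ.erase μ, if x ν = y ν then 1 else 0

theorem slotMatrix_neg (μ : ι) (A : Matrix (X μ) (X μ) K) :
    slotMatrix μ (-A) = -slotMatrix μ A := by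
  ext x y
  simp [slotMatrix]

theorem conjTranspose_slotMatrix [StarRing K] (μ : ι) (A : Matrix (X μ) (X μ) K) :
    (slotMatrix μ A)ᴴ = slotMatrix μ Aᴴ := by
  ext x y
  simp only [slotMatrix, conjTranspose_apply, of_apply, star_mul', star_prod]
  congr 1
  refine prod_congr rfl fun ν _ => ?_
  split_ifs with h₁ h₂ h₂ <;> simp_all [eq_comm]

variable [∀ μ, Fintype (X μ)]

theorem slotMatrix_mulVec (μ : ι) (A : Matrix (X μ) (X μ) K) (f : (∀ ν, X ν) → K)
    (x : ∀ ν, X ν) : (slotMatrix μ A *ᵥ f) x = ∑ k, A (x μ) k * f (update x μ k) := by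
  have off_line : ∀ y ∉ univ.image (update x μ), slotMatrix μ A x y * f y = 0 := by
    intro y hy
    obtain ⟨ν, hνμ, hν⟩ : ∃ ν, ν ≠ μ ∧ x ν ≠ y ν := by
      by_contra! h
      refine hy (mem_image.mpr ⟨y μ, mem_univ _, funext fun ν => ?_⟩)
      rcases eq_or_ne ν μ with rfl | hνμ
      · simp
      · simp [hνμ, h ν hνμ]
    simp only [slotMatrix, of_apply]
    rw [prod_eq_zero (mem_erase.mpr ⟨hνμ, mem_univ ν⟩) (if_neg hν), mul_zero, zero_mul]
  rw [mulVec, dotProduct, ← sum_subset (subset_univ _) fun y _ hy => off_line y hy,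
    sum_image fun _ _ _ _ h => update_injective x μ h]
  refine sum_congr rfl fun k _ => ?_
  rw [slotMatrix, of_apply, update_self, prod_eq_one fun ν hν => ?_, mul_one]
  rw [update_of_ne (ne_of_mem_erase hν), if_pos rfl]

theorem slotMatrix_commute {μ ν : ι} (hne : μ ≠ ν) (A : Matrix (X μ) (X μ) K)
    (B : Matrix (X ν) (X ν) K) : Commute (slotMatrix μ A) (slotMatrix ν B) := by
  refine ext_iff_mulVec.mpr fun f => funext fun x => ?_
  simp only [← mulVec_mulVec, slotMatrix_mulVec, mul_sum, update_of_ne hne,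
    update_of_ne hne.symm]
  rw [sum_comm]
  refine sum_congr rfl fun l _ => sum_congr rfl fun k _ => ?_
  rw [update_comm hne]
  ring

end SlotMatrix

section DiracKernel

variable {𝕜 ι S : Type*} [RCLike 𝕜] [Fintype ι] [DecidableEq ι] [Fintype S] [DecidableEq S]
  {X : ι → Type*} [∀ μ, Fintype (X μ)] [∀ μ, DecidableEq (X μ)]

theorem ker_toLin'_sum_slotMatrix_kronecker {A : ∀ μ, Matrix (X μ) (X μ) 𝕜}
    (hA : ∀ μ, (A μ)ᴴ = -A μ) (γ : ι → Matrix S S 𝕜)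
    (hγ : ∀ μ ν, γ μ * γ ν + γ ν * γ μ = if μ = ν then (2 : 𝕜) • (1 : Matrix S S 𝕜) else 0) :
    LinearMap.ker (toLin' (∑ μ, slotMatrix μ (A μ) ⊗ₖ γ μ)) =
      ⨅ μ, LinearMap.ker (toLin' (slotMatrix μ (A μ) ⊗ₖ (1 : Matrix S S 𝕜))) := by
  set b : ι → Matrix _ _ 𝕜 := fun μ => slotMatrix μ (A μ) ⊗ₖ (1 : Matrix S S 𝕜)
  set g : ι → Matrix ((∀ μ, X μ) × S) ((∀ μ, X μ) × S) 𝕜 := fun μ => 1 ⊗ₖ γ μ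
  have hgb : ∀ μ ν, Commute (g μ) (b ν) := fun μ ν => by
    simp only [g, b, Commute, SemiconjBy, ← mul_kronecker_mul, one_mul, mul_one]
  have hb : ∀ μ ν, Commute (b μ) (b ν) := fun μ ν => by
    rcases eq_or_ne μ ν with rfl | hne
    · rfl
    · simp only [b, Commute, SemiconjBy, ← mul_kronecker_mul, (slotMatrix_commute hne _ _).eq]
  have hg : ∀ μ ν, g μ * g ν + g ν * g μ = if μ = ν then 2 else 0 := fun μ ν => by
    simp only [g, ← mul_kronecker_mul, one_mul, ← kronecker_add, hγ]
    split_ifs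
    · rw [kronecker_smul, one_kronecker_one, two_smul, one_add_one_eq_two]
    · rw [kronecker_zero]
  have hD : ∑ μ, slotMatrix μ (A μ) ⊗ₖ γ μ = ∑ μ, g μ * b μ := by
    simp only [g, b, ← mul_kronecker_mul, one_mul, mul_one]
  have hskew : ∀ μ, (b μ)ᴴ = -b μ := fun μ => by
    ext ⟨x, s⟩ ⟨y, t⟩
    simp only [b, conjTranspose_kronecker, conjTranspose_slotMatrix, hA, slotMatrix_neg,
      conjTranspose_one, kronecker_apply, Matrix.neg_apply, neg_mul]
  ext v
  simp only [Submodule.mem_iInf, LinearMap.mem_ker, toLin'_apply]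
  constructor
  · intro hv
    refine mulVec_eq_zero_of_sum_mul_self_mulVec_eq_zero hskew ?_
    have hsq : ∑ μ, b μ * b μ = (∑ μ, g μ * b μ) ^ 2 := by
      simp only [← sq, sq_sum_mul_eq_sum_sq_of_clifford g b hb hgb hg]
    rw [hsq, ← hD, sq, ← mulVec_mulVec, hv, mulVec_zero]
  · intro hv
    simp only [hD, sum_mulVec, ← mulVec_mulVec, b, hv, mulVec_zero, sum_const_zero]

end DiracKernel

section RetractionKernel

variable {K : Type*} [CommRing K]

/-- Every `f ∈ ker A` is recovered from its restriction along `emb` by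
`f j = weight j * f (emb (proj j))`, so restriction along `emb` identifies `ker A` with `Y → K`. -/
structure KernelRetraction {X : Type*} [Fintype X] (A : Matrix X X K) (Y : Type*) where
  emb : Y → X
  proj : X → Y
  weight : X → K
  proj_emb : ∀ y, proj (emb y) = y
  weight_emb : ∀ y, weight (emb y) = 1
  mulVec_eq_zero_iff : ∀ f, A *ᵥ f = 0 ↔ ∀ j, f j = weight j * f (emb (proj j))

theorem kronecker_one_mulVec_apply {m S : Type*} [Fintype m] [Fintype S] [DecidableEq S]
    (B : Matrix m m K) (v : m × S → K) (x : m) (s : S) :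
    ((B ⊗ₖ (1 : Matrix S S K)) *ᵥ v) (x, s) = (B *ᵥ fun y => v (y, s)) x := by
  simp [mulVec, dotProduct, Fintype.sum_prod_type, one_apply]

variable {ι S : Type*} [Fintype ι] [DecidableEq ι] [Fintype S] [DecidableEq S] {X : ι → Type*}
  [∀ μ, Fintype (X μ)] [∀ μ, DecidableEq (X μ)]

theorem slotMatrix_kronecker_one_mulVec_eq_zero_iff (μ : ι) (A : Matrix (X μ) (X μ) K)
    (v : (∀ ν, X ν) × S → K) :
    (slotMatrix μ A ⊗ₖ (1 : Matrix S S K)) *ᵥ v = 0 ↔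
      ∀ x s, A *ᵥ (fun k => v (update x μ k, s)) = 0 := by
  have hline : ∀ x s, ((slotMatrix μ A ⊗ₖ (1 : Matrix S S K)) *ᵥ v) (x, s) =
      (A *ᵥ fun k => v (update x μ k, s)) (x μ) := fun x s => by
    rw [kronecker_one_mulVec_apply, slotMatrix_mulVec]
    rfl
  constructor
  · intro h x s
    funext j
    simpa [hline] using congrFun h (update x μ j, s)
  · intro h
    funext ⟨x, s⟩
    rw [hline, h, Pi.zero_apply, Pi.zero_apply]

variable {Y : ι → Type*} {A : ∀ μ, Matrix (X μ) (X μ) K}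

theorem mem_iInf_ker_slotMatrix_kronecker_one_iff (R : ∀ μ, KernelRetraction (A μ) (Y μ))
    (v : (∀ μ, X μ) × S → K) :
    v ∈ ⨅ μ, LinearMap.ker (toLin' (slotMatrix μ (A μ) ⊗ₖ (1 : Matrix S S K))) ↔
      ∀ x s, v (x, s) =
        (∏ μ, (R μ).weight (x μ)) * v (fun μ => (R μ).emb ((R μ).proj (x μ)), s) := by
  simp only [Submodule.mem_iInf, LinearMap.mem_ker, toLin'_apply,
    slotMatrix_kronecker_one_mulVec_eq_zero_iff, (R _).mulVec_eq_zero_iff]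
  have key s := forall_update_eq_mul_iff (fun μ j => (R μ).emb ((R μ).proj j))
    (fun μ j => by rw [(R μ).proj_emb]) (fun μ => (R μ).weight) (fun μ j => (R μ).weight_emb _)
    (fun x => v (x, s))
  exact ⟨fun h x s => (key s).mp (fun μ x j => h μ x s j) x,
    fun h μ x s j => (key s).mpr (fun x => h x s) μ x j⟩

noncomputable def iInfKerSlotMatrixKroneckerOneEquiv (R : ∀ μ, KernelRetraction (A μ) (Y μ)) :
    ↥(⨅ μ, LinearMap.ker (toLin' (slotMatrix μ (A μ) ⊗ₖ (1 : Matrix S S K)))) ≃ₗ[K]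
      ((∀ μ, Y μ) × S → K) where
  toFun v p := v.1 (fun μ => (R μ).emb (p.1 μ), p.2)
  map_add' _ _ := rfl
  map_smul' _ _ := rfl
  invFun w := ⟨fun p => (∏ μ, (R μ).weight (p.1 μ)) * w (fun μ => (R μ).proj (p.1 μ), p.2),
    (mem_iInf_ker_slotMatrix_kronecker_one_iff R _).mpr fun x s => by
      simp [(R _).proj_emb, (R _).weight_emb]⟩
  left_inv v := Subtype.ext <| funext fun p =>
    ((mem_iInf_ker_slotMatrix_kronecker_one_iff R v.1).mp v.2 p.1 p.2).symm
  right_inv w := funext fun p => by simp [(R _).proj_emb, (R _).weight_emb]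

theorem finrank_iInf_ker_slotMatrix_kronecker_one [Nontrivial K] [∀ μ, Fintype (Y μ)]
    (R : ∀ μ, KernelRetraction (A μ) (Y μ)) :
    Module.finrank K ↥(⨅ μ, LinearMap.ker (toLin' (slotMatrix μ (A μ) ⊗ₖ (1 : Matrix S S K)))) =
      Fintype.card S * ∏ μ, Fintype.card (Y μ) := by
  rw [(iInfKerSlotMatrixKroneckerOneEquiv R).finrank_eq, Module.finrank_pi, Fintype.card_prod,
    Fintype.card_pi, mul_comm]

end RetractionKernel

section CycleDigraph

variable {N : ℕ}

theorem Fin.val_one_of_two_le [NeZero N] (hN : 2 ≤ N) : ((1 : Fin N) : ℕ) = 1 := by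
  rw [Fin.val_one', Nat.mod_eq_of_lt hN]

theorem Fin.add_one_ne_sub_one [NeZero N] (hN : 3 ≤ N) (j : Fin N) : j + 1 ≠ j - 1 := by
  intro h
  rw [sub_eq_add_neg, add_right_inj, eq_neg_iff_add_eq_zero, Fin.ext_iff, Fin.val_add,
    Fin.val_one_of_two_le (by omega), Fin.val_zero, Nat.mod_eq_of_lt (by omega)] at h
  omega

theorem cycleAsAdj_apply [NeZero N] (hN : 2 ≤ N) (j k : Fin N) :
    cycleAsAdj N j k = if k = j + 1 then 1 else if k = j - 1 then -1 else 0 := by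
  have hnext : (k : ℕ) = ((j : ℕ) + 1) % N ↔ k = j + 1 := by
    rw [Fin.ext_iff, Fin.val_add, Fin.val_one_of_two_le hN]
  have hprev : (j : ℕ) = ((k : ℕ) + 1) % N ↔ k = j - 1 := by
    rw [eq_sub_iff_add_eq, eq_comm, Fin.ext_iff, Fin.val_add, Fin.val_one_of_two_le hN]
  simp only [cycleAsAdj, hnext, hprev]

theorem cycleAsAdj_mulVec [NeZero N] (hN : 3 ≤ N) (f : Fin N → ℂ) (j : Fin N) :
    (cycleAsAdj N *ᵥ f) j = f (j + 1) - f (j - 1) := by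
  have hne := Fin.add_one_ne_sub_one hN j
  rw [mulVec, dotProduct, Fintype.sum_eq_add (j + 1) (j - 1) hne fun k hk => ?_]
  · rw [cycleAsAdj_apply (by omega), if_pos rfl, cycleAsAdj_apply (by omega), if_neg hne.symm,
      if_pos rfl, one_mul, neg_one_mul, ← sub_eq_add_neg]
  · simp [cycleAsAdj_apply (by omega : 2 ≤ N), hk.1, hk.2]

theorem cycleAsAdj_conjTranspose (hN : 3 ≤ N) : (cycleAsAdj N)ᴴ = -cycleAsAdj N := by
  have : NeZero N := ⟨by omega⟩
  ext j k
  have hne := Fin.add_one_ne_sub_one hN j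
  have hprev : j = k + 1 ↔ k = j - 1 := eq_comm.trans eq_sub_iff_add_eq.symm
  have hnext : j = k - 1 ↔ k = j + 1 := eq_sub_iff_add_eq.trans eq_comm
  rw [conjTranspose_apply, Matrix.neg_apply, cycleAsAdj_apply (by omega),
    cycleAsAdj_apply (by omega)]
  simp only [hprev, hnext]
  split_ifs <;> simp_all

open Fin.NatCast in
theorem cycleAsAdj_mulVec_eq_zero_iff (hN : Even N) (h4 : 4 ≤ N) (f : Fin N → ℂ) :
    cycleAsAdj N *ᵥ f = 0 ↔ ∀ j : Fin N, f j = f ⟨j % 2, by omega⟩ := by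
  have : NeZero N := ⟨by omega⟩
  simp only [funext_iff, Pi.zero_apply, cycleAsAdj_mulVec (by omega : 3 ≤ N), sub_eq_zero]
  constructor
  · intro h j
    have hper : Function.Periodic (fun n : ℕ => f (n : Fin N)) 2 := fun n => by
      simpa [add_assoc, one_add_one_eq_two] using h (n + 1)
    have := hper.map_mod_nat j
    simp only [Fin.cast_val_eq_self] at this
    rw [← this]
    congr 1
    ext
    rw [Fin.val_natCast, Nat.mod_eq_of_lt (by omega)]
  · intro h j
    rw [h (j + 1), h (j - 1)]
    congr 2
    rw [Fin.val_add, Fin.val_sub, Fin.val_one_of_two_le (by omega),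
      Nat.mod_mod_of_dvd _ hN.two_dvd, Nat.mod_mod_of_dvd _ hN.two_dvd]
    obtain ⟨m, rfl⟩ := hN
    omega

noncomputable def cycleAsAdjKernelRetraction (hN : Even N) (h4 : 4 ≤ N) :
    KernelRetraction (cycleAsAdj N) (Fin 2) where
  emb := Fin.castLE (by omega)
  proj j := ⟨j % 2, Nat.mod_lt _ two_pos⟩
  weight _ := 1
  proj_emb y := Fin.ext (Nat.mod_eq_of_lt y.isLt)
  weight_emb _ := rfl
  mulVec_eq_zero_iff f := by simpa using cycleAsAdj_mulVec_eq_zero_iff hN h4 f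

end CycleDigraph

section PathDigraph

variable {N : ℕ}

theorem Fin.sum_ite_val_eq {M : Type*} [AddCommMonoid M] (f : Fin N → M) (n : ℕ) :
    ∑ k : Fin N, (if (k : ℕ) = n then f k else 0) = if h : n < N then f ⟨n, h⟩ else 0 := by
  split_ifs with h
  · rw [Fintype.sum_eq_single ⟨n, h⟩ fun k hk => if_neg fun hkn => hk (Fin.ext hkn), if_pos rfl]
  · exact sum_eq_zero fun k _ => if_neg (by omega)

theorem pathAsAdj_mulVec (f : Fin N → ℂ) (j : Fin N) :
    (pathAsAdj N *ᵥ f) j = (if h : (j : ℕ) + 1 < N then f ⟨j + 1, h⟩ else 0) -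
      (if h : 0 < (j : ℕ) then f ⟨j - 1, by omega⟩ else 0) := by
  have hsplit : ∀ k : Fin N, pathAsAdj N j k * f k =
      (if (k : ℕ) = j + 1 then f k else 0) -
        (if (k : ℕ) = j - 1 ∧ 0 < (j : ℕ) then f k else 0) := by
    intro k
    simp only [pathAsAdj]
    split_ifs <;> first | omega | simp
  rw [mulVec, dotProduct, Fintype.sum_congr _ _ hsplit, sum_sub_distrib, Fin.sum_ite_val_eq]
  congr 1
  split_ifs with hj
  · rw [sum_congr rfl fun k _ => if_congr (and_iff_left hj) rfl rfl, Fin.sum_ite_val_eq,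
      dif_pos (by omega)]
  · exact sum_eq_zero fun k _ => if_neg fun h => hj h.2

theorem pathAsAdj_conjTranspose : (pathAsAdj N)ᴴ = -pathAsAdj N := by
  ext j k
  simp only [conjTranspose_apply, Matrix.neg_apply, pathAsAdj]
  split_ifs <;> first | omega | simp

theorem pathAsAdj_mulVec_eq_zero_iff (hN : Odd N) (f : Fin N → ℂ) :
    pathAsAdj N *ᵥ f = 0 ↔
      ∀ j : Fin N, f j = (if Even (j : ℕ) then 1 else 0) * f ⟨0, hN.pos⟩ := by
  simp only [funext_iff, Pi.zero_apply, pathAsAdj_mulVec, sub_eq_zero]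
  constructor
  · intro h
    suffices H : ∀ n (hn : n < N), f ⟨n, hn⟩ = (if Even n then 1 else 0) * f ⟨0, hN.pos⟩ from
      fun j => H j j.isLt
    intro n
    induction n using Nat.twoStepInduction with
    | zero => simp
    | one => intro hn; simpa [hn] using h ⟨0, hN.pos⟩
    | more n ih _ =>
      intro hn
      have := h ⟨n + 1, by omega⟩
      simp only [dif_pos hn, dif_pos n.succ_pos] at this
      rw [this]
      refine (ih (by omega)).trans ?_
      simp [Nat.even_add]
  · intro h j
    obtain ⟨m, hm⟩ := hN
    split_ifs with hnext hprev hprev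
    · rw [h ⟨_, hnext⟩, h ⟨(j : ℕ) - 1, by omega⟩]
      simp only [Nat.even_iff, show ((j : ℕ) + 1) % 2 = ((j : ℕ) - 1) % 2 by omega]
    · rw [h]
      simp [show (j : ℕ) = 0 by omega]
    · rw [h]
      simp [Nat.even_iff, show ((j : ℕ) - 1) % 2 = 1 by omega]
    · rfl

noncomputable def pathAsAdjKernelRetraction (hN : Odd N) :
    KernelRetraction (pathAsAdj N) (Fin 1) where
  emb _ := ⟨0, hN.pos⟩
  proj _ := 0
  weight j := if Even (j : ℕ) then 1 else 0
  proj_emb _ := Subsingleton.elim _ _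
  weight_emb _ := by simp
  mulVec_eq_zero_iff f := pathAsAdj_mulVec_eq_zero_iff hN f

end PathDigraph

open Matrix in
theorem dirac_ker_dim_product_graph_general
    (D : ℕ) (N : Fin D → ℕ) (cyc : Fin D → Bool) (d : ℕ)
    (hd : d = (Finset.univ.filter fun μ => cyc μ = true).card)
    (hcyc : ∀ μ, cyc μ = true → Even (N μ) ∧ 4 ≤ N μ)
    (hpath : ∀ μ, cyc μ = false → Odd (N μ))
    (r : ℕ)
    (γ : Fin D → Matrix (Fin r) (Fin r) ℂ)
    (hγ : ∀ μ ν, γ μ * γ ν + γ ν * γ μ =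
      if μ = ν then (2 : ℂ) • (1 : Matrix (Fin r) (Fin r) ℂ) else 0) :
    let A : ∀ μ, Matrix (Fin (N μ)) (Fin (N μ)) ℂ :=
      fun μ => if cyc μ then cycleAsAdj (N μ) else pathAsAdj (N μ)
    let Dop : Matrix ((∀ μ, Fin (N μ)) × Fin r) ((∀ μ, Fin (N μ)) × Fin r) ℂ :=
      Matrix.of fun p q => ∑ μ, (A μ (p.1 μ) (q.1 μ)) * (γ μ p.2 q.2) *
        ∏ ν ∈ Finset.univ.erase μ, (if p.1 ν = q.1 ν then (1 : ℂ) else 0)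
    Module.finrank ℂ (LinearMap.ker (Matrix.toLin' Dop)) = r * 2 ^ d := by
  intro A Dop
  have hDop : Dop = ∑ μ, slotMatrix μ (A μ) ⊗ₖ γ μ := by
    ext ⟨x, s⟩ ⟨y, t⟩
    simp only [Dop, slotMatrix, of_apply, Matrix.sum_apply, kronecker_apply]
    exact sum_congr rfl fun μ _ => by ring
  have hskew : ∀ μ, (A μ)ᴴ = -A μ := fun μ => by
    cases h : cyc μ
    · simp [A, h, pathAsAdj_conjTranspose]
    · simp [A, h, cycleAsAdj_conjTranspose (le_trans (by norm_num) (hcyc μ h).2)]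
  have R : ∀ μ, KernelRetraction (A μ) (Fin (if cyc μ then 2 else 1)) := fun μ => by
    cases h : cyc μ
    · simpa [A, h] using pathAsAdjKernelRetraction (hpath μ h)
    · simpa [A, h] using cycleAsAdjKernelRetraction (hcyc μ h).1 (hcyc μ h).2
  rw [hDop, ker_toLin'_sum_slotMatrix_kronecker hskew γ hγ,
    finrank_iInf_ker_slotMatrix_kronecker_one R]
  simp [prod_ite, hd]

open Matrix in
theorem dirac_ker_dim_product_graph
    (D : ℕ) (N : Fin D → ℕ) (cyc : Fin D → Bool) (d : ℕ)
    (hd : d = (Finset.univ.filter fun μ => cyc μ = true).card)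
    (hcyc : ∀ μ, cyc μ = true → Even (N μ) ∧ 4 ≤ N μ)
    (hpath : ∀ μ, cyc μ = false → Odd (N μ))
    (r : ℕ) (hr : 1 ≤ r)
    (γ : Fin D → Matrix (Fin r) (Fin r) ℂ)
    (hγ : ∀ μ ν, γ μ * γ ν + γ ν * γ μ =
      if μ = ν then (2 : ℂ) • (1 : Matrix (Fin r) (Fin r) ℂ) else 0) :
    let A : ∀ μ, Matrix (Fin (N μ)) (Fin (N μ)) ℂ :=
      fun μ => if cyc μ then cycleAsAdj (N μ) else pathAsAdj (N μ)
    let Dop : Matrix ((∀ μ, Fin (N μ)) × Fin r) ((∀ μ, Fin (N μ)) × Fin r) ℂ :=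
      Matrix.of fun p q => ∑ μ, (A μ (p.1 μ) (q.1 μ)) * (γ μ p.2 q.2) *
        ∏ ν ∈ Finset.univ.erase μ, (if p.1 ν = q.1 ν then (1 : ℂ) else 0)
    Module.finrank ℂ (LinearMap.ker (Matrix.toLin' Dop)) = r * 2 ^ d :=
  dirac_ker_dim_product_graph_general D N cyc d hd hcyc hpath r γ hγ
end

section
/- Let G be the cartesian product of d cycle digraphs (any numbers of vertices ≥ 3) and (D-d) simple directed paths (any numbers of vertices ≥ 2), and 𝒟(G) = Σ_μ (A_as)_μ ⊗ γ_μ the associated Dirac operator. Then dim ker 𝒟(G) ≤ rank(γ) · 2^d. -/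
open Finset Matrix
open scoped Kronecker ComplexOrder

theorem sum_mul_sum_self_of_anticomm {ι 𝕜 R : Type*} [Fintype ι] [DecidableEq ι] [Field 𝕜]
    [NeZero (2 : 𝕜)] [Ring R] [Module 𝕜 R] (X Y : ι → R)
    (h : ∀ μ ν, X μ * X ν + X ν * X μ = if μ = ν then (2 : 𝕜) • Y μ else 0) :
    (∑ μ, X μ) * (∑ μ, X μ) = ∑ μ, Y μ := by
  refine smul_right_injective R (two_ne_zero' 𝕜) ?_
  calc (2 : 𝕜) • ((∑ μ, X μ) * ∑ μ, X μ)
      = ∑ μ, ∑ ν, X μ * X ν + ∑ μ, ∑ ν, X ν * X μ := by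
        rw [two_smul, sum_mul_sum, sum_comm (f := fun μ ν => X ν * X μ)]
    _ = (2 : 𝕜) • ∑ μ, Y μ := by simp [← sum_add_distrib, h, smul_sum]

theorem Submodule.finrank_le_card_of_eq_zero_of_comp_eq_zero {K α β : Type*} [Field K]
    [Fintype β] (V : Submodule K (α → K)) (e : β → α) (h : ∀ x ∈ V, x ∘ e = 0 → x = 0) :
    Module.finrank K V ≤ Fintype.card β := by
  have hinj : Function.Injective ((LinearMap.funLeft K K e).comp V.subtype) := by
    rw [← LinearMap.ker_eq_bot, LinearMap.ker_eq_bot']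
    exact fun x hx => Subtype.ext (h x x.2 hx)
  simpa using LinearMap.finrank_le_finrank_of_injective hinj

namespace Matrix

theorem mulVec_eq_zero_of_sum_conjTranspose_mul_self_mulVec_eq_zero {ι n R : Type*} [Fintype ι]
    [Fintype n] [CommRing R] [PartialOrder R] [StarRing R] [StarOrderedRing R] [NoZeroDivisors R]
    (Z : ι → Matrix n n R) {x : n → R} (hx : (∑ μ, (Z μ)ᴴ * Z μ) *ᵥ x = 0) (μ : ι) :
    Z μ *ᵥ x = 0 := by
  have hsum : ∑ μ, star (Z μ *ᵥ x) ⬝ᵥ (Z μ *ᵥ x) = 0 := by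
    simp only [star_mulVec, ← dotProduct_mulVec, mulVec_mulVec, ← dotProduct_sum, ← sum_mulVec,
      hx, dotProduct_zero]
  exact dotProduct_star_self_eq_zero.1 <|
    (sum_eq_zero_iff_of_nonneg fun μ _ => dotProduct_star_self_nonneg _).1 hsum μ (mem_univ μ)

theorem kronecker_anticomm_of_commute {m n R : Type*} [Fintype m] [Fintype n] [CommSemiring R]
    {B B' : Matrix m m R} (hB : Commute B B') (g g' : Matrix n n R) :
    B ⊗ₖ g * B' ⊗ₖ g' + B' ⊗ₖ g' * B ⊗ₖ g = (B * B') ⊗ₖ (g * g' + g' * g) := by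
  rw [← mul_kronecker_mul, ← mul_kronecker_mul, ← hB.eq, kronecker_add]

theorem kronecker_one_mulVec_apply {m n R : Type*} [Fintype m] [Fintype n] [DecidableEq n]
    [CommSemiring R] (B : Matrix m m R) (x : m × n → R) (p : m) (s : n) :
    (B ⊗ₖ (1 : Matrix n n R) *ᵥ x) (p, s) = (B *ᵥ fun q => x (q, s)) p := by
  simp [mulVec, dotProduct, Fintype.sum_prod_type, one_apply]

section OnFactor

variable {ι : Type*} [Fintype ι] [DecidableEq ι] {X : ι → Type*} [∀ i, DecidableEq (X i)]
  {R : Type*}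

/-- The operator `1 ⊗ ⋯ ⊗ M ⊗ ⋯ ⊗ 1` on `⨂ i, R^(X i)`, with `M` in the `μ`-th slot. -/
def onFactor [CommSemiring R] (μ : ι) (M : Matrix (X μ) (X μ) R) :
    Matrix (∀ i, X i) (∀ i, X i) R :=
  of fun p q => M (p μ) (q μ) * ∏ ν ∈ univ.erase μ, if p ν = q ν then 1 else 0

theorem onFactor_neg [CommRing R] (μ : ι) (M : Matrix (X μ) (X μ) R) :
    onFactor μ (-M) = -onFactor μ M := by
  ext p q
  simp [onFactor]

theorem conjTranspose_onFactor [CommSemiring R] [StarRing R] (μ : ι)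
    (M : Matrix (X μ) (X μ) R) : (onFactor μ M)ᴴ = onFactor μ Mᴴ := by
  ext p q
  simp [onFactor, apply_ite star, eq_comm]

variable [∀ i, Fintype (X i)]

theorem prod_erase_ite_eq_ite_mem_image_update [CommSemiring R] (μ : ι) (p q : ∀ i, X i) :
    (∏ ν ∈ univ.erase μ, if p ν = q ν then (1 : R) else 0) =
      if q ∈ univ.image (Function.update p μ) then 1 else 0 := by
  rw [prod_boole]
  congr 1
  simp only [mem_erase, mem_univ, and_true, mem_image, true_and, eq_iff_iff]
  constructor
  · intro h
    refine ⟨q μ, funext fun ν => ?_⟩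
    by_cases hν : ν = μ
    · subst hν; simp
    · rw [Function.update_of_ne hν, h ν hν]
  · rintro ⟨k, rfl⟩ ν hν
    rw [Function.update_of_ne hν]

theorem onFactor_mulVec_apply [CommSemiring R] (μ : ι) (M : Matrix (X μ) (X μ) R)
    (x : (∀ i, X i) → R) (p : ∀ i, X i) :
    (onFactor μ M *ᵥ x) p = (M *ᵥ fun k => x (Function.update p μ k)) (p μ) := by
  have hinj : Set.InjOn (Function.update p μ) (univ : Finset (X μ)) := fun a _ b _ h => by
    simpa using congrFun h μ
  simp only [mulVec, dotProduct, onFactor, of_apply, prod_erase_ite_eq_ite_mem_image_update,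
    mul_ite, mul_one, mul_zero, ite_mul, zero_mul]
  rw [sum_ite_mem, univ_inter, sum_image hinj]
  simp

theorem onFactor_commute [CommSemiring R] {μ ν : ι} (h : μ ≠ ν) (M : Matrix (X μ) (X μ) R)
    (M' : Matrix (X ν) (X ν) R) : Commute (onFactor μ M) (onFactor ν M') := by
  refine ext_iff_mulVec.2 fun x => funext fun p => ?_
  rw [← mulVec_mulVec, ← mulVec_mulVec]
  simp only [onFactor_mulVec_apply]
  simp only [mulVec, dotProduct, mul_sum, Function.update_of_ne h, Function.update_of_ne h.symm,
    Function.update_comm h]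
  rw [sum_comm]
  exact sum_congr rfl fun _ _ => sum_congr rfl fun _ _ => by ring

theorem eq_zero_of_forall_onFactor_mulVec_eq_zero [CommSemiring R]
    (M : ∀ μ, Matrix (X μ) (X μ) R) (S : ∀ μ, Finset (X μ))
    (hM : ∀ μ (y : X μ → R), M μ *ᵥ y = 0 → (∀ k ∈ S μ, y k = 0) → y = 0)
    {x : (∀ i, X i) → R} (hx : ∀ μ, onFactor μ (M μ) *ᵥ x = 0)
    (hS : ∀ p, (∀ μ, p μ ∈ S μ) → x p = 0) : x = 0 := by
  -- Release the coordinates in `T` from the box one at a time, applying `hM` along lines.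
  suffices ∀ T : Finset ι, ∀ p, (∀ μ ∉ T, p μ ∈ S μ) → x p = 0 from
    funext fun p => this univ p (by simp)
  intro T
  induction T using Finset.induction_on with
  | empty => exact fun p hp => hS p fun μ => hp μ (notMem_empty μ)
  | insert μ T _ ih =>
    intro p hp
    have hline : (fun k => x (Function.update p μ k)) = 0 := by
      refine hM μ _ (funext fun j => ?_) fun k hk => ih _ fun ν hν => ?_
      · simpa [onFactor_mulVec_apply] using congrFun (hx μ) (Function.update p μ j)
      · by_cases h : ν = μ
        · subst h; simpa using hk
        · rw [Function.update_of_ne h]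
          exact hp ν (by simp [h, hν])
    simpa using congrFun hline (p μ)

variable {n : Type*} [Fintype n] [DecidableEq n]

theorem onFactor_kronecker_one_mulVec_eq_zero (M : ∀ μ, Matrix (X μ) (X μ) ℂ)
    (hM : ∀ μ, (M μ)ᴴ = -M μ) (γ : ι → Matrix n n ℂ)
    (hγ : ∀ μ ν, γ μ * γ ν + γ ν * γ μ = if μ = ν then (2 : ℂ) • (1 : Matrix n n ℂ) else 0)
    {x : (∀ i, X i) × n → ℂ} (hx : (∑ μ, onFactor μ (M μ) ⊗ₖ γ μ) *ᵥ x = 0) (μ : ι) :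
    onFactor μ (M μ) ⊗ₖ (1 : Matrix n n ℂ) *ᵥ x = 0 := by
  set B := fun μ => onFactor μ (M μ) ⊗ₖ (1 : Matrix n n ℂ)
  have hB : ∀ μ, (B μ)ᴴ = -B μ := fun μ => by
    simp only [B, conjTranspose_kronecker, conjTranspose_onFactor, hM, onFactor_neg,
      conjTranspose_one]
    ext
    simp
  have hsq : (∑ μ, onFactor μ (M μ) ⊗ₖ γ μ) * (∑ μ, onFactor μ (M μ) ⊗ₖ γ μ) =
      ∑ μ, -((B μ)ᴴ * B μ) := by
    refine sum_mul_sum_self_of_anticomm (𝕜 := ℂ) _ _ fun μ ν => ?_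
    have hcomm : Commute (onFactor μ (M μ)) (onFactor ν (M ν)) := by
      by_cases h : μ = ν
      · subst h; exact Commute.refl _
      · exact onFactor_commute h _ _
    rw [kronecker_anticomm_of_commute hcomm, hγ]
    split_ifs with h
    · subst h
      simp [B, hB, ← mul_kronecker_mul, kronecker_smul]
    · exact kronecker_zero _
  refine mulVec_eq_zero_of_sum_conjTranspose_mul_self_mulVec_eq_zero B ?_ μ
  rw [← neg_eq_zero, ← neg_mulVec, ← sum_neg_distrib, ← hsq, ← mulVec_mulVec, hx, mulVec_zero]

theorem finrank_ker_sum_onFactor_kronecker_le (M : ∀ μ, Matrix (X μ) (X μ) ℂ)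
    (hM : ∀ μ, (M μ)ᴴ = -M μ) (γ : ι → Matrix n n ℂ)
    (hγ : ∀ μ ν, γ μ * γ ν + γ ν * γ μ = if μ = ν then (2 : ℂ) • (1 : Matrix n n ℂ) else 0)
    (S : ∀ μ, Finset (X μ))
    (hS : ∀ μ (y : X μ → ℂ), M μ *ᵥ y = 0 → (∀ k ∈ S μ, y k = 0) → y = 0) :
    Module.finrank ℂ (LinearMap.ker (toLin' (∑ μ, onFactor μ (M μ) ⊗ₖ γ μ))) ≤
      (∏ μ, #(S μ)) * Fintype.card n := by
  have hcard : Fintype.card ((∀ μ, S μ) × n) = (∏ μ, #(S μ)) * Fintype.card n := by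
    simp [Fintype.card_prod, Fintype.card_pi]
  rw [← hcard]
  refine Submodule.finrank_le_card_of_eq_zero_of_comp_eq_zero _
    (fun b => (fun μ => (b.1 μ : X μ), b.2)) fun x hx hbox => funext fun ⟨p, s⟩ => ?_
  rw [LinearMap.mem_ker, toLin'_apply] at hx
  have hslice : (fun q => x (q, s)) = 0 := by
    refine eq_zero_of_forall_onFactor_mulVec_eq_zero M S hS (fun μ => funext fun q => ?_)
      fun q hq => congrFun hbox ((fun μ => ⟨q μ, hq μ⟩), s)
    rw [← kronecker_one_mulVec_apply, onFactor_kronecker_one_mulVec_eq_zero M hM γ hγ hx]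
    rfl
  exact congrFun hslice p

end OnFactor

end Matrix

theorem Nat.add_one_mod_eq_ite {x N : ℕ} (hx : x < N) :
    (x + 1) % N = if x + 1 = N then 0 else x + 1 := by
  split_ifs with h
  · simp [h]
  · exact Nat.mod_eq_of_lt (by omega)

theorem conjTranspose_cycleAsAdj {N : ℕ} (hN : 3 ≤ N) : (cycleAsAdj N)ᴴ = -cycleAsAdj N := by
  ext j k
  have hj := Nat.add_one_mod_eq_ite j.isLt
  have hk := Nat.add_one_mod_eq_ite k.isLt
  simp only [conjTranspose_apply, Matrix.neg_apply]
  unfold cycleAsAdj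
  simp only [hj, hk]
  split_ifs <;> first | omega | contradiction | simp

theorem conjTranspose_pathAsAdj (N : ℕ) : (pathAsAdj N)ᴴ = -pathAsAdj N := by
  ext j k
  simp only [conjTranspose_apply, Matrix.neg_apply]
  unfold pathAsAdj
  split_ifs <;> first | omega | contradiction | simp

theorem cycleAsAdj_row_succ {N i : ℕ} (hi : i + 2 < N) :
    cycleAsAdj N ⟨i + 1, by omega⟩ = Pi.single ⟨i + 2, hi⟩ 1 - Pi.single ⟨i, by omega⟩ 1 := by
  funext k
  have hk := Nat.add_one_mod_eq_ite k.isLt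
  simp only [cycleAsAdj, Nat.mod_eq_of_lt hi, hk, Pi.sub_apply, Pi.single_apply, Fin.ext_iff]
  split_ifs <;> first | omega | contradiction | simp

theorem pathAsAdj_row_succ {N i : ℕ} (hi : i + 2 < N) :
    pathAsAdj N ⟨i + 1, by omega⟩ = Pi.single ⟨i + 2, hi⟩ 1 - Pi.single ⟨i, by omega⟩ 1 := by
  funext k
  simp only [pathAsAdj, Pi.sub_apply, Pi.single_apply, Fin.ext_iff]
  split_ifs <;> first | omega | contradiction | simp

theorem pathAsAdj_row_zero {N : ℕ} (hN : 1 < N) :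
    pathAsAdj N ⟨0, by omega⟩ = Pi.single ⟨1, hN⟩ 1 := by
  funext k
  simp only [pathAsAdj, Pi.single_apply, Fin.ext_iff]
  split_ifs <;> first | omega | contradiction | simp

theorem eq_zero_of_row_succ_mulVec_eq_zero {R : Type*} [CommRing R] {N : ℕ}
    {M : Matrix (Fin N) (Fin N) R}
    (hM : ∀ i (hi : i + 2 < N),
      M ⟨i + 1, by omega⟩ = Pi.single ⟨i + 2, hi⟩ 1 - Pi.single ⟨i, by omega⟩ 1)
    {y : Fin N → R} (hy : M *ᵥ y = 0) (h0 : ∀ k : Fin N, (k : ℕ) < 2 → y k = 0) : y = 0 := by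
  suffices ∀ n (hn : n < N), y ⟨n, hn⟩ = 0 from funext fun k => this k k.isLt
  intro n
  induction n using Nat.twoStepInduction with
  | zero => exact fun hn => h0 _ (by simp)
  | one => exact fun hn => h0 _ (by simp)
  | more i ih _ =>
    intro hi
    have := congrFun hy ⟨i + 1, by omega⟩
    simp only [mulVec, hM i hi, sub_dotProduct, single_dotProduct, one_mul, Pi.zero_apply] at this
    rw [ih (by omega), sub_zero] at this
    exact this

theorem eq_zero_of_cycleAsAdj_mulVec_eq_zero {N : ℕ} {y : Fin N → ℂ}
    (hy : cycleAsAdj N *ᵥ y = 0) (h0 : ∀ k : Fin N, (k : ℕ) < 2 → y k = 0) : y = 0 :=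
  eq_zero_of_row_succ_mulVec_eq_zero (fun _ hi => cycleAsAdj_row_succ hi) hy h0

theorem eq_zero_of_pathAsAdj_mulVec_eq_zero {N : ℕ} {y : Fin N → ℂ}
    (hy : pathAsAdj N *ᵥ y = 0) (h0 : ∀ k : Fin N, (k : ℕ) < 1 → y k = 0) : y = 0 := by
  refine eq_zero_of_row_succ_mulVec_eq_zero (fun _ hi => pathAsAdj_row_succ hi) hy fun k hk => ?_
  obtain hk0 | hk1 := Nat.lt_or_ge (k : ℕ) 1
  · exact h0 k hk0
  · have := congrFun hy ⟨0, by omega⟩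
    simp only [mulVec, pathAsAdj_row_zero (show 1 < N by omega), single_dotProduct, one_mul,
      Pi.zero_apply] at this
    rwa [show k = ⟨1, by omega⟩ from Fin.ext (show (k : ℕ) = 1 by omega)]

open Matrix in
theorem dirac_ker_dim_product_graph_le_general
    (D : ℕ) (N : Fin D → ℕ) (cyc : Fin D → Bool) (d : ℕ)
    (hd : d = (Finset.univ.filter fun μ => cyc μ = true).card)
    (hcyc : ∀ μ, cyc μ = true → 3 ≤ N μ)
    (r : ℕ)
    (γ : Fin D → Matrix (Fin r) (Fin r) ℂ)
    (hγ : ∀ μ ν, γ μ * γ ν + γ ν * γ μ =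
      if μ = ν then (2 : ℂ) • (1 : Matrix (Fin r) (Fin r) ℂ) else 0) :
    let A : ∀ μ, Matrix (Fin (N μ)) (Fin (N μ)) ℂ :=
      fun μ => if cyc μ then cycleAsAdj (N μ) else pathAsAdj (N μ)
    let Dop : Matrix ((∀ μ, Fin (N μ)) × Fin r) ((∀ μ, Fin (N μ)) × Fin r) ℂ :=
      Matrix.of fun p q => ∑ μ, (A μ (p.1 μ) (q.1 μ)) * (γ μ p.2 q.2) *
        ∏ ν ∈ Finset.univ.erase μ, (if p.1 ν = q.1 ν then (1 : ℂ) else 0)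
    Module.finrank ℂ (LinearMap.ker (Matrix.toLin' Dop)) ≤ r * 2 ^ d := by
  intro A Dop
  let b : Fin D → ℕ := fun μ => if cyc μ then 2 else 1
  have hA : ∀ μ, (A μ)ᴴ = -A μ := fun μ => by
    by_cases h : cyc μ
    · simpa [A, h] using conjTranspose_cycleAsAdj (hcyc μ h)
    · simpa [A, h] using conjTranspose_pathAsAdj (N μ)
  have hbox : ∀ μ (y : Fin (N μ) → ℂ), A μ *ᵥ y = 0 →
      (∀ k ∈ ({k | (k : ℕ) < b μ} : Finset (Fin (N μ))), y k = 0) → y = 0 := fun μ y hy h0 => by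
    by_cases h : cyc μ
    · simp only [A, b, h, if_true, mem_filter, mem_univ, true_and] at hy h0
      exact eq_zero_of_cycleAsAdj_mulVec_eq_zero hy h0
    · simp only [A, b, h, Bool.false_eq_true, if_false, mem_filter, mem_univ, true_and] at hy h0
      exact eq_zero_of_pathAsAdj_mulVec_eq_zero hy h0
  have hDop : Dop = ∑ μ, onFactor μ (A μ) ⊗ₖ γ μ := by
    ext
    simp [Dop, onFactor, Matrix.sum_apply, mul_right_comm]
  calc Module.finrank ℂ (LinearMap.ker (toLin' Dop))
      ≤ (∏ μ, #({k | (k : ℕ) < b μ} : Finset (Fin (N μ)))) * Fintype.card (Fin r) :=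
        hDop ▸ finrank_ker_sum_onFactor_kronecker_le A hA γ hγ _ hbox
    _ ≤ (∏ μ, b μ) * r := by
        rw [Fintype.card_fin]
        gcongr with μ
        exact Fin.card_filter_val_lt.trans_le (min_le_right _ _)
    _ = r * 2 ^ d := by
        rw [prod_ite, prod_const, prod_const_one, mul_one, hd, mul_comm]

open Matrix in
theorem dirac_ker_dim_product_graph_le
    (D : ℕ) (N : Fin D → ℕ) (cyc : Fin D → Bool) (d : ℕ)
    (hd : d = (Finset.univ.filter fun μ => cyc μ = true).card)
    (hcyc : ∀ μ, cyc μ = true → 3 ≤ N μ)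
    (hpath : ∀ μ, cyc μ = false → 2 ≤ N μ)
    (r : ℕ) (hr : 1 ≤ r)
    (γ : Fin D → Matrix (Fin r) (Fin r) ℂ)
    (hγ : ∀ μ ν, γ μ * γ ν + γ ν * γ μ =
      if μ = ν then (2 : ℂ) • (1 : Matrix (Fin r) (Fin r) ℂ) else 0) :
    let A : ∀ μ, Matrix (Fin (N μ)) (Fin (N μ)) ℂ :=
      fun μ => if cyc μ then cycleAsAdj (N μ) else pathAsAdj (N μ)
    let Dop : Matrix ((∀ μ, Fin (N μ)) × Fin r) ((∀ μ, Fin (N μ)) × Fin r) ℂ :=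
      Matrix.of fun p q => ∑ μ, (A μ (p.1 μ) (q.1 μ)) * (γ μ p.2 q.2) *
        ∏ ν ∈ Finset.univ.erase μ, (if p.1 ν = q.1 ν then (1 : ℂ) else 0)
    Module.finrank ℂ (LinearMap.ker (Matrix.toLin' Dop)) ≤ r * 2 ^ d :=
  dirac_ker_dim_product_graph_le_general D N cyc d hd hcyc r γ hγ
end
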